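/- Let π be a non-crossing annular (m,n)-permutation and let π₁ = π|_{[m]} be the permutation induced by π on [m] = {1,…,m}. Let B̄ ⊆ [m] be the set of all i ∈ [m] whose orbit under π^c = γ_{m,n}π⁻¹ meets both {1,…,m} and {m+1,…,m+n} (i.e., i lies in a through-orbit of π^c). Then B̄ is a single orbit of the permutation γ_m π₁⁻¹ of [m], where γ_m = (1,2,…,m). -/

import Mathlib

/-- The number of orbits of a permutation of `Fin n` (fixed points counted). -/
def numOrbits {n : ℕ} (σ : Equiv.Perm (Fin n)) : ℕ :=
  σ.cycleType.card + (Finset.univ.filter fun x => σ x = x).card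

/-- `B` is an orbit of the permutation `σ`. -/
def IsBlock {n : ℕ} (σ : Equiv.Perm (Fin n)) (B : Set (Fin n)) : Prop :=
  ∃ x, B = {y | σ.SameCycle x y}

/-- `γ_{m,n}`: the permutation of `[m+n]` with the two cycles
`(1,…,m)(m+1,…,m+n)`. -/
def annRot (m n : ℕ) : Equiv.Perm (Fin (m + n)) :=
  finSumFinEquiv.permCongr (Equiv.sumCongr (finRotate m) (finRotate n))

/-- `π` is a non-crossing annular `(m,n)`-permutation: some orbit of `π` meets
both `{1,…,m}` and `{m+1,…,m+n}`, and `#(π) + #(γ_{m,n} π⁻¹) = m + n`. -/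
def IsAnnularNC (m n : ℕ) (π : Equiv.Perm (Fin (m + n))) : Prop :=
  (∃ x y : Fin (m + n), (x : ℕ) < m ∧ m ≤ (y : ℕ) ∧ π.SameCycle x y) ∧
  numOrbits π + numOrbits (annRot m n * π⁻¹) = m + n

open scoped Classical in
/-- The first-return map of `π` to the set `A`: it sends `i` to `π^k i` for the
least `k ≥ 1` with `π^k i ∈ A` (and is the identity if there is no such `k`).
For `i ∈ A` this is the permutation `π|_A` induced by `π` on `A`. -/
noncomputable def firstReturn {N : ℕ} (π : Equiv.Perm (Fin N)) (A : Set (Fin N))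
    (i : Fin N) : Fin N :=
  if h : ∃ k : ℕ, 0 < k ∧ (π ^ k) i ∈ A then (π ^ Nat.find h) i else i

/-!
Write `σ = γπ⁻¹` for `γ = γ_{m,n}`, `S = [m]`, and let `K = γ_S (π|_S)⁻¹`, which is
`γ_m π₁⁻¹` on `S`. If the `σ`-cycle of `a ∈ S` stays inside `S`, then `K` agrees with `σ` along
it, so `#K = w + u`, where `w` counts the `σ`-cycles inside `S` and `u` the `K`-cycles on `B̄`.
The genus inequality `#A + #B ≤ |S| + #(BA)` for `A = π|_S`, `B = K`, `BA = γ_S` then gives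
`#π|_S + w + u ≤ m + 1`. The same holds on the other circle, and for the pair `(σ⁻¹, γ⁻¹)` in
place of `(π, γ)` (its complement is `π⁻¹`). Adding the four inequalities, the left-hand sides
total `2(#π + #σ) + Σ u = 2(m + n) + Σ u`, so `Σ u ≤ 4`. Since `π`, hence also `σ`, has a
cycle meeting both circles, each `u ≥ 1`; thus `u = 1`, i.e. `B̄` is a single cycle of `K`.
-/

open Equiv Set

theorem Set.ncard_image_le_ncard_image_of_fibers {α β γ : Type*} [Finite α] {f : α → β}
    {g : α → γ} {s : Set α} (h : ∀ a ∈ s, ∀ b ∈ s, g a = g b → f a = f b) :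
    (f '' s).ncard ≤ (g '' s).ncard := by
  rcases s.eq_empty_or_nonempty with rfl | ⟨a₀, -⟩
  · simp
  have : Nonempty α := ⟨a₀⟩
  have hsub : f '' s ⊆ (f ∘ Function.invFunOn g s) '' (g '' s) := by
    rintro _ ⟨a, ha, rfl⟩
    have hex : ∃ a' ∈ s, g a' = g a := ⟨a, ha, rfl⟩
    exact ⟨g a, mem_image_of_mem g ha,
      h _ (Function.invFunOn_mem hex) _ ha (Function.invFunOn_eq hex)⟩
  exact (ncard_le_ncard hsub).trans (ncard_image_le (toFinite _))

namespace Equiv.Perm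

variable {α β : Type*}

section Orbits

variable {p : Perm β} {q σ : Perm α} {T : Set β}

theorem SameCycle.mem_of_mapsTo [Finite β] (hT : Set.MapsTo p T T) {a b : β}
    (h : p.SameCycle a b) (ha : a ∈ T) : b ∈ T := by
  obtain ⟨k, -, rfl⟩ := h.exists_pow_eq'
  exact hT.perm_pow k ha

theorem pow_apply_of_semiconjOn {f : β → α} (hT : Set.MapsTo p T T)
    (hpq : ∀ b ∈ T, f (p b) = q (f b)) (k : ℕ) {a : β} (ha : a ∈ T) :
    f ((p ^ k) a) = (q ^ k) (f a) := by
  induction k with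
  | zero => rfl
  | succ k ih =>
    rw [pow_succ', mul_apply, hpq _ (hT.perm_pow k ha), ih, ← mul_apply, ← pow_succ']

theorem sameCycle_iff_of_semiconjOn [Finite α] [Finite β] {f : β → α}
    (hf : Function.Injective f) (hT : Set.MapsTo p T T) (hpq : ∀ b ∈ T, f (p b) = q (f b))
    {a b : β} (ha : a ∈ T) : p.SameCycle a b ↔ q.SameCycle (f a) (f b) := by
  constructor
  · intro h
    obtain ⟨k, -, rfl⟩ := h.exists_pow_eq'
    exact ⟨k, by rw [zpow_natCast, pow_apply_of_semiconjOn hT hpq k ha]⟩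
  · intro h
    obtain ⟨k, -, hk⟩ := h.exists_pow_eq'
    refine ⟨k, hf ?_⟩
    rw [zpow_natCast, pow_apply_of_semiconjOn hT hpq k ha, hk]

theorem SameCycle.of_swap_mul [Finite α] [DecidableEq α] {x y a b : α}
    (h : (swap x y * σ).SameCycle a b) :
    σ.SameCycle a b ∨
      ((σ.SameCycle x a ∨ σ.SameCycle y a) ∧ (σ.SameCycle x b ∨ σ.SameCycle y b)) := by
  set Z : Set α := {u | σ.SameCycle x u ∨ σ.SameCycle y u}
  have hσZ : ∀ u, σ u ∈ Z ↔ u ∈ Z := fun u => by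
    simp [Z, sameCycle_apply_right]
  by_cases ha : a ∈ Z
  · refine Or.inr ⟨ha, h.mem_of_mapsTo (fun u hu => ?_) ha⟩
    rw [mul_apply, swap_apply_def]
    split_ifs
    · exact Or.inr (.refl _ _)
    · exact Or.inl (.refl _ _)
    · exact (hσZ u).2 hu
  · have hagree : ∀ u ∈ Zᶜ, (swap x y * σ) u = σ u := fun u hu => by
      have hx : σ u ≠ x := fun hx => hu ((hσZ u).1 (hx ▸ Or.inl (.refl _ _)))
      have hy : σ u ≠ y := fun hy => hu ((hσZ u).1 (hy ▸ Or.inr (.refl _ _)))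
      rw [mul_apply, swap_apply_of_ne_of_ne hx hy]
    have hmaps : Set.MapsTo (swap x y * σ) Zᶜ Zᶜ := fun u hu => by
      rw [hagree u hu]
      exact fun h => hu ((hσZ u).1 h)
    exact Or.inl ((sameCycle_iff_of_semiconjOn Function.injective_id hmaps hagree ha).1 h)

end Orbits

noncomputable def numCyclesOn (σ : Perm α) (s : Set α) : ℕ :=
  (Quotient.mk (SameCycle.setoid σ) '' s).ncard

noncomputable def numCycles (σ : Perm α) : ℕ := numCyclesOn σ univ

section Counting

variable {σ τ : Perm α} {s t : Set α}

theorem mk_eq_mk_iff_sameCycle {a b : α} :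
    Quotient.mk (SameCycle.setoid σ) a = Quotient.mk (SameCycle.setoid σ) b ↔ σ.SameCycle a b :=
  Quotient.eq

theorem numCyclesOn_union_le : numCyclesOn σ (s ∪ t) ≤ numCyclesOn σ s + numCyclesOn σ t := by
  rw [numCyclesOn, image_union]
  exact ncard_union_le _ _

theorem numCyclesOn_eq_of_subset (hst : s ⊆ t) (h : ∀ b ∈ t, ∃ a ∈ s, σ.SameCycle a b) :
    numCyclesOn σ s = numCyclesOn σ t := by
  refine congrArg ncard (Subset.antisymm (image_mono hst) ?_)
  rintro _ ⟨b, hb, rfl⟩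
  obtain ⟨a, ha, hab⟩ := h b hb
  exact ⟨a, ha, mk_eq_mk_iff_sameCycle.2 hab⟩

theorem numCyclesOn_eq_ncard (h : ∀ a ∈ s, ∀ b ∈ s, σ.SameCycle a b → a = b) :
    numCyclesOn σ s = s.ncard :=
  InjOn.ncard_image fun a ha b hb hab => h a ha b hb (mk_eq_mk_iff_sameCycle.1 hab)

theorem numCyclesOn_image [Finite β] {p : Perm β} {f : β → α} {s : Set β}
    (h : ∀ a ∈ s, ∀ b ∈ s, p.SameCycle a b ↔ σ.SameCycle (f a) (f b)) :
    numCyclesOn σ (f '' s) = numCyclesOn p s := by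
  rw [numCyclesOn, numCyclesOn, image_image]
  refine le_antisymm ?_ ?_ <;>
    refine ncard_image_le_ncard_image_of_fibers fun a ha b hb hab => ?_
  · exact mk_eq_mk_iff_sameCycle.2 ((h a ha b hb).1 (mk_eq_mk_iff_sameCycle.1 hab))
  · exact mk_eq_mk_iff_sameCycle.2 ((h a ha b hb).2 (mk_eq_mk_iff_sameCycle.1 hab))

variable [Finite α]

theorem numCyclesOn_le_of_sameCycle_imp
    (h : ∀ a ∈ s, ∀ b ∈ s, τ.SameCycle a b → σ.SameCycle a b) :
    numCyclesOn σ s ≤ numCyclesOn τ s :=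
  ncard_image_le_ncard_image_of_fibers fun a ha b hb hab =>
    mk_eq_mk_iff_sameCycle.2 (h a ha b hb (mk_eq_mk_iff_sameCycle.1 hab))

theorem numCyclesOn_inv : numCyclesOn σ⁻¹ s = numCyclesOn σ s := by
  simpa using numCyclesOn_image (σ := σ⁻¹) (p := σ) (f := id) (s := s)
    fun _ _ _ _ => sameCycle_inv.symm

theorem numCyclesOn_mono (hst : s ⊆ t) : numCyclesOn σ s ≤ numCyclesOn σ t :=
  ncard_le_ncard (image_mono hst)

theorem numCyclesOn_union (h : ∀ a ∈ s, ∀ b ∈ t, ¬σ.SameCycle a b) :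
    numCyclesOn σ (s ∪ t) = numCyclesOn σ s + numCyclesOn σ t := by
  rw [numCyclesOn, image_union]
  refine ncard_union_eq (disjoint_left.2 ?_)
  rintro _ ⟨a, ha, rfl⟩ ⟨b, hb, hba⟩
  exact h a ha b hb (mk_eq_mk_iff_sameCycle.1 hba.symm)

theorem numCyclesOn_le_one (h : ∀ a ∈ s, ∀ b ∈ s, σ.SameCycle a b) : numCyclesOn σ s ≤ 1 := by
  refine (ncard_le_one (toFinite _)).2 ?_
  rintro _ ⟨a, ha, rfl⟩ _ ⟨b, hb, rfl⟩
  exact mk_eq_mk_iff_sameCycle.2 (h a ha b hb)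

theorem numCyclesOn_pos (hs : s.Nonempty) : 0 < numCyclesOn σ s :=
  (ncard_pos (toFinite _)).2 (hs.image _)

theorem eq_setOf_sameCycle_of_numCyclesOn_eq_one (hs : ∀ a ∈ s, ∀ b, σ.SameCycle a b → b ∈ s)
    (h : numCyclesOn σ s = 1) {a : α} (ha : a ∈ s) : s = {b | σ.SameCycle a b} := by
  refine Subset.antisymm (fun b hb => ?_) (hs a ha)
  exact mk_eq_mk_iff_sameCycle.1
    ((ncard_le_one (toFinite _)).1 h.le _ (mem_image_of_mem _ ha) _ (mem_image_of_mem _ hb))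

end Counting

section Genus

theorem numCycles_one : numCycles (1 : Perm α) = Nat.card α := by
  rw [numCycles, numCyclesOn_eq_ncard fun _ _ _ _ h => sameCycle_one.1 h, ncard_univ]

variable [Finite α]

theorem numCycles_inv (σ : Perm α) : numCycles σ⁻¹ = numCycles σ := numCyclesOn_inv

theorem numCycles_le_numCycles_swap_mul_add_one [DecidableEq α] (σ : Perm α) (x y : α) :
    numCycles σ ≤ numCycles (swap x y * σ) + 1 := by
  set T := {z | ¬σ.SameCycle y z}
  have hcover : univ = T ∪ {z | σ.SameCycle y z} := by
    ext z; by_cases hz : σ.SameCycle y z <;> simp [T, hz]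
  have hyCycle : numCyclesOn σ {z | σ.SameCycle y z} ≤ 1 :=
    numCyclesOn_le_one fun a ha b hb => SameCycle.trans (SameCycle.symm ha) hb
  have hrefine : numCyclesOn σ T ≤ numCyclesOn (swap x y * σ) T := by
    refine numCyclesOn_le_of_sameCycle_imp fun a ha b hb hab => ?_
    rcases hab.of_swap_mul with h | ⟨hxa | hya, hxb | hyb⟩
    exacts [h, hxa.symm.trans hxb, absurd hyb hb, absurd hya ha, absurd hya ha]
  calc numCycles σ ≤ numCyclesOn σ T + 1 := by
        rw [numCycles, hcover]; exact numCyclesOn_union_le.trans (by omega)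
    _ ≤ numCycles (swap x y * σ) + 1 := by
        gcongr; exact hrefine.trans (numCyclesOn_mono (subset_univ T))

theorem numCycles_add_one_le_numCycles_swap_mul [DecidableEq α] (σ : Perm α) {x : α}
    (hx : σ x ≠ x) : numCycles σ + 1 ≤ numCycles (swap x (σ x) * σ) := by
  set τ := swap x (σ x) * σ
  have hτx : τ x = x := by simp [τ]
  have hxσx : σ.SameCycle x (σ x) := sameCycle_apply_right.2 (.refl _ _)
  have hσ : numCyclesOn σ {x}ᶜ = numCycles σ := by
    refine numCyclesOn_eq_of_subset (subset_univ _) fun b _ => ?_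
    by_cases hb : b = x
    · exact ⟨σ x, hx, hb ▸ hxσx.symm⟩
    · exact ⟨b, hb, .refl _ _⟩
  have hrefine : numCyclesOn σ {x}ᶜ ≤ numCyclesOn τ {x}ᶜ := by
    refine numCyclesOn_le_of_sameCycle_imp fun a _ b _ hab => ?_
    rcases hab.of_swap_mul with h | ⟨hxa, hxb⟩
    · exact h
    · exact (hxa.elim id hxσx.trans).symm.trans (hxb.elim id hxσx.trans)
  have hτ : numCycles τ = 1 + numCyclesOn τ {x}ᶜ := by
    have hsplit := numCyclesOn_union (σ := τ) (s := {x}) (t := {x}ᶜ)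
      fun a ha b hb hab => hb (mem_singleton_iff.1 ha ▸ hab.eq_of_left (ha ▸ hτx)).symm
    rw [union_compl_self] at hsplit
    rw [numCycles, hsplit, numCyclesOn_eq_ncard (by simp), ncard_singleton]
  omega

-- Peel transpositions off `A`: each one splits off a cycle of `A` and costs at most one of `B`.
theorem numCycles_add_numCycles_le (A B : Perm α) :
    numCycles A + numCycles B ≤ Nat.card α + numCycles (B * A) := by
  classical
  have := Fintype.ofFinite α
  induction hA : A.support.card using Nat.strong_induction_on generalizing A B with
  | _ k ih =>
    by_cases hA1 : A = 1
    · subst hA1; rw [numCycles_one, mul_one]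
    obtain ⟨x, hx⟩ : ∃ x, A x ≠ x := not_forall.1 fun h => hA1 (Equiv.ext h)
    have hsplit := numCycles_add_one_le_numCycles_swap_mul A hx
    have hmerge : numCycles B ≤ numCycles (B * swap x (A x)) + 1 := by
      have := numCycles_le_numCycles_swap_mul_add_one B⁻¹ x (A x)
      rwa [numCycles_inv, ← swap_inv, ← mul_inv_rev, numCycles_inv] at this
    have hIH := ih _ (hA ▸ card_support_swap_mul hx) (swap x (A x) * A)
      (B * swap x (A x)) rfl
    rw [mul_assoc, swap_mul_self_mul] at hIH
    omega

end Genus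

section CycleType

variable [Fintype α] [DecidableEq α]

theorem cycleFactorsFinset_eq_image_cycleOf (σ : Perm α) :
    σ.cycleFactorsFinset = σ.support.image σ.cycleOf := by
  ext c
  rw [Finset.mem_image]
  constructor
  · intro hc
    obtain ⟨a, ha, -⟩ := (mem_cycleFactorsFinset_iff.1 hc).1
    have ha' : a ∈ c.support := mem_support.2 ha
    exact ⟨a, mem_cycleFactorsFinset_support_le hc ha', (cycle_is_cycleOf ha' hc).symm⟩
  · rintro ⟨a, ha, rfl⟩
    exact cycleOf_mem_cycleFactorsFinset_iff.2 ha

theorem numCyclesOn_support (σ : Perm α) :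
    numCyclesOn σ σ.support = Multiset.card σ.cycleType := by
  rw [cycleType_def, Multiset.card_map, ← Finset.card_def, cycleFactorsFinset_eq_image_cycleOf,
    ← ncard_coe_finset, Finset.coe_image, numCyclesOn]
  refine le_antisymm ?_ ?_ <;>
    refine ncard_image_le_ncard_image_of_fibers fun a ha b hb hab => ?_
  · exact mk_eq_mk_iff_sameCycle.2 ((sameCycle_iff_cycleOf_eq_of_mem_support ha hb).2 hab)
  · exact (sameCycle_iff_cycleOf_eq_of_mem_support ha hb).1 (mk_eq_mk_iff_sameCycle.1 hab)

theorem numCycles_eq_card_cycleType_add_card_fixedPoints (σ : Perm α) :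
    numCycles σ =
      Multiset.card σ.cycleType + (Finset.univ.filter fun x => σ x = x).card := by
  have hfix : (σ.support : Set α)ᶜ = ↑(Finset.univ.filter fun x => σ x = x) := by
    ext x; simp
  have hsplit := numCyclesOn_union (σ := σ) (s := σ.support) (t := (σ.support : Set α)ᶜ)
    fun a ha b hb hab =>
      mem_support.1 ha (hab.symm.eq_of_left (notMem_support.1 hb) ▸ notMem_support.1 hb)
  rw [union_compl_self] at hsplit
  rw [numCycles, hsplit, numCyclesOn_support,
    numCyclesOn_eq_ncard (s := (σ.support : Set α)ᶜ) fun a ha _ _ hab =>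
      hab.eq_of_left (notMem_support.1 ha), hfix, ncard_coe_finset]

end CycleType

section Crossing

def withinPart (τ : Perm α) (s : Set α) : Set α := {x | x ∈ s ∧ ∀ y, τ.SameCycle x y → y ∈ s}

def crossingPart (τ : Perm α) (s : Set α) : Set α :=
  {x | (∃ y ∈ s, τ.SameCycle x y) ∧ ∃ y ∉ s, τ.SameCycle x y}

variable {τ : Perm α} {s : Set α}

theorem withinPart_inv : withinPart τ⁻¹ s = withinPart τ s := by
  simp [withinPart, sameCycle_inv]

theorem crossingPart_inv : crossingPart τ⁻¹ s = crossingPart τ s := by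
  simp [crossingPart, sameCycle_inv]

theorem crossingPart_compl : crossingPart τ sᶜ = crossingPart τ s := by
  ext x
  simp only [crossingPart, mem_ofPred_eq, mem_compl_iff, not_not]
  exact and_comm

theorem mem_crossingPart_iff_of_mem {x : α} (hx : x ∈ s) :
    x ∈ crossingPart τ s ↔ ∃ y ∉ s, τ.SameCycle x y :=
  and_iff_right ⟨x, hx, .refl _ _⟩

theorem mem_crossingPart_iff_notMem_withinPart {x : α} (hx : x ∈ s) :
    x ∈ crossingPart τ s ↔ x ∉ withinPart τ s := by
  rw [mem_crossingPart_iff_of_mem hx]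
  constructor
  · rintro ⟨y, hy, hxy⟩ ⟨-, h⟩
    exact hy (h y hxy)
  · intro h
    by_contra hc
    exact h ⟨hx, fun y hxy => by_contra fun hy => hc ⟨y, hy, hxy⟩⟩

theorem apply_mem_withinPart {x : α} (hx : x ∈ withinPart τ s) : τ x ∈ withinPart τ s :=
  ⟨hx.2 _ (sameCycle_apply_right.2 (.refl _ _)),
    fun y hy => hx.2 y ((sameCycle_apply_right.2 (.refl _ _)).trans hy)⟩

theorem SameCycle.mem_crossingPart {x y : α} (hxy : τ.SameCycle x y)
    (hx : x ∈ crossingPart τ s) : y ∈ crossingPart τ s := by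
  obtain ⟨⟨a, ha, hxa⟩, b, hb, hxb⟩ := hx
  exact ⟨⟨a, ha, hxy.symm.trans hxa⟩, b, hb, hxy.symm.trans hxb⟩

theorem inter_crossingPart_nonempty (h : (crossingPart τ s).Nonempty) :
    (s ∩ crossingPart τ s).Nonempty := by
  obtain ⟨x, hx⟩ := h
  obtain ⟨y, hy, hxy⟩ := hx.1
  exact ⟨y, hy, hxy.mem_crossingPart hx⟩

theorem not_sameCycle_of_mem_withinPart_of_mem_crossingPart {a b : α}
    (ha : a ∈ withinPart τ s) (hb : b ∈ crossingPart τ s) : ¬τ.SameCycle a b := by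
  obtain ⟨-, y, hy, hby⟩ := hb
  exact fun hab => hy (ha.2 y (hab.trans hby))

theorem apply_mem_iff_of_crossingPart_eq_empty (h : crossingPart τ s = ∅) (x : α) :
    τ x ∈ s ↔ x ∈ s := by
  have hx : τ.SameCycle x (τ x) := sameCycle_apply_right.2 (.refl _ _)
  by_contra hne
  refine (eq_empty_iff_forall_notMem.1 h) x ?_
  by_cases hxs : x ∈ s
  · exact ⟨⟨x, hxs, .refl _ _⟩, τ x, fun h' => hne ⟨fun _ => hxs, fun _ => h'⟩, hx⟩
  · exact ⟨⟨τ x, by tauto, hx⟩, x, hxs, .refl _ _⟩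

variable [Finite α]

theorem crossingPart_eq_empty_of_apply_mem_iff (h : ∀ x, τ x ∈ s ↔ x ∈ s) :
    crossingPart τ s = ∅ := by
  refine eq_empty_of_forall_notMem fun x ⟨⟨y, hy, hxy⟩, z, hz, hxz⟩ => hz ?_
  exact (hxy.symm.trans hxz).mem_of_mapsTo (fun u hu => (h u).2 hu) hy

theorem crossingPart_mul_inv_nonempty {π γ : Perm α} (hγ : ∀ x, γ x ∈ s ↔ x ∈ s)
    (h : (crossingPart π s).Nonempty) : (crossingPart (γ * π⁻¹) s).Nonempty := by
  refine nonempty_iff_ne_empty.2 fun hσ => (nonempty_iff_ne_empty.1 h) ?_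
  have hσinv : ∀ x, (γ * π⁻¹)⁻¹ x ∈ s ↔ x ∈ s := fun x => by
    simpa using (apply_mem_iff_of_crossingPart_eq_empty hσ ((γ * π⁻¹)⁻¹ x)).symm
  refine crossingPart_eq_empty_of_apply_mem_iff fun x => ?_
  rw [show π x = (γ * π⁻¹)⁻¹ (γ x) by simp, hσinv, hγ]

variable (τ s)

theorem numCyclesOn_eq_withinPart_add_crossingPart :
    numCyclesOn τ s = numCyclesOn τ (withinPart τ s) + numCyclesOn τ (crossingPart τ s) := by
  have hcover : s = withinPart τ s ∪ (s ∩ crossingPart τ s) := by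
    ext x
    by_cases hx : x ∈ s
    · simp [hx, mem_crossingPart_iff_notMem_withinPart hx, em]
    · exact ⟨fun h => absurd h hx, fun h => h.elim (·.1) (·.1)⟩
  have hcross : numCyclesOn τ (s ∩ crossingPart τ s) = numCyclesOn τ (crossingPart τ s) := by
    refine numCyclesOn_eq_of_subset inter_subset_right fun b hb => ?_
    obtain ⟨y, hy, hby⟩ := hb.1
    exact ⟨y, ⟨hy, hby.mem_crossingPart hb⟩, hby.symm⟩
  conv_lhs => rw [hcover]
  rw [numCyclesOn_union fun a ha b hb =>
    not_sameCycle_of_mem_withinPart_of_mem_crossingPart ha hb.2, hcross]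

theorem numCycles_eq_withinPart_add_withinPart_add_crossingPart :
    numCycles τ = numCyclesOn τ (withinPart τ s) + numCyclesOn τ (withinPart τ sᶜ) +
      numCyclesOn τ (crossingPart τ s) := by
  have hcover : univ = withinPart τ s ∪ (withinPart τ sᶜ ∪ crossingPart τ s) := by
    refine (eq_univ_of_forall fun x => ?_).symm
    by_cases hx : x ∈ s
    · by_cases hw : x ∈ withinPart τ s
      · exact Or.inl hw
      · exact Or.inr (Or.inr ((mem_crossingPart_iff_notMem_withinPart hx).2 hw))
    · by_cases hw : x ∈ withinPart τ sᶜ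
      · exact Or.inr (Or.inl hw)
      · rw [← crossingPart_compl]
        exact Or.inr (Or.inr ((mem_crossingPart_iff_notMem_withinPart (s := sᶜ) hx).2 hw))
  rw [numCycles, hcover, numCyclesOn_union, numCyclesOn_union, add_assoc]
  · exact fun a ha b hb => not_sameCycle_of_mem_withinPart_of_mem_crossingPart ha
      (by rwa [crossingPart_compl])
  · rintro a ha b (hb | hb) hab
    · exact hb.1 (ha.2 b hab)
    · exact not_sameCycle_of_mem_withinPart_of_mem_crossingPart ha hb hab

end Crossing

section FirstReturn

variable {N : ℕ} (π : Perm (Fin N)) (S : Set (Fin N)) {i : Fin N}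

theorem exists_pos_pow_apply_mem (hi : i ∈ S) : ∃ k, 0 < k ∧ (π ^ k) i ∈ S :=
  ⟨orderOf π, orderOf_pos π, by rwa [pow_orderOf_eq_one]⟩

theorem firstReturn_spec (hi : i ∈ S) :
    ∃ k, 0 < k ∧ firstReturn π S i = (π ^ k) i ∧ (π ^ k) i ∈ S ∧
      ∀ j, 0 < j → j < k → (π ^ j) i ∉ S := by
  have h := exists_pos_pow_apply_mem π S hi
  classical
  rw [firstReturn, dif_pos h]
  exact ⟨Nat.find h, (Nat.find_spec h).1, by congr, (Nat.find_spec h).2,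
    fun j hj hjk hjS => Nat.find_min h hjk ⟨hj, hjS⟩⟩

theorem firstReturn_mem (hi : i ∈ S) : firstReturn π S i ∈ S := by
  obtain ⟨k, -, hk, hkS, -⟩ := firstReturn_spec π S hi
  exact hk ▸ hkS

theorem firstReturn_eq_apply (hi : i ∈ S) (h : π i ∈ S) : firstReturn π S i = π i := by
  obtain ⟨k, hk, hret, -, hmin⟩ := firstReturn_spec π S hi
  obtain rfl : k = 1 := by
    by_contra hk1
    exact hmin 1 one_pos (by omega) (by rwa [pow_one])
  rwa [pow_one] at hret

theorem sameCycle_firstReturn (hi : i ∈ S) : π.SameCycle i (firstReturn π S i) := by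
  obtain ⟨k, -, hk, -⟩ := firstReturn_spec π S hi
  exact ⟨k, by rw [zpow_natCast, hk]⟩

theorem firstReturn_injOn : Set.InjOn (firstReturn π S) S := by
  suffices key : ∀ {i j : Fin N}, i ∈ S → ∀ k l, 0 < k → k ≤ l →
      (∀ t, 0 < t → t < l → (π ^ t) j ∉ S) → (π ^ k) i = (π ^ l) j → i = j by
    intro i hi j hj hij
    obtain ⟨k, hk, hki, -, hkmin⟩ := firstReturn_spec π S hi
    obtain ⟨l, hl, hlj, -, hlmin⟩ := firstReturn_spec π S hj
    rcases le_total k l with h | h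
    · exact key hi k l hk h hlmin (hki ▸ hlj ▸ hij)
    · exact (key hj l k hl h hkmin (hki ▸ hlj ▸ hij).symm).symm
  intro i j hi k l hk hkl hmin heq
  have hij : i = (π ^ (l - k)) j := by
    apply (π ^ k).injective
    rw [heq, ← mul_apply, ← pow_add, Nat.add_sub_cancel' hkl]
  rcases Nat.eq_zero_or_pos (l - k) with h0 | hpos
  · rw [hij, h0, pow_zero, one_apply]
  · exact absurd (hij ▸ hi) (hmin (l - k) hpos (by omega))

noncomputable def inducedPerm : Perm S :=
  Equiv.ofBijective (fun a => ⟨firstReturn π S a, firstReturn_mem π S a.2⟩)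
    (Finite.injective_iff_bijective.1 fun a b hab =>
      Subtype.ext (firstReturn_injOn π S a.2 b.2 (congrArg Subtype.val hab)))

@[simp]
theorem inducedPerm_apply (a : S) : (inducedPerm π S a : Fin N) = firstReturn π S a := rfl

theorem inducedPerm_inv_apply {a : S} (h : π⁻¹ a ∈ S) :
    ((inducedPerm π S)⁻¹ a : Fin N) = π⁻¹ a := by
  rw [show (inducedPerm π S)⁻¹ a = ⟨π⁻¹ a, h⟩ from inv_eq_iff_eq.2 (Subtype.ext ?_)]
  rw [inducedPerm_apply, firstReturn_eq_apply π S h (by simp)]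
  simp

theorem sameCycle_inducedPerm_iff {a b : S} :
    (inducedPerm π S).SameCycle a b ↔ π.SameCycle a b := by
  constructor
  · intro h
    exact h.mem_of_mapsTo (T := {c : S | π.SameCycle a c})
      (fun c hc => hc.trans (sameCycle_firstReturn π S c.2)) (.refl _ _)
  · intro h
    obtain ⟨k, -, hk⟩ := h.exists_pow_eq'
    clear h
    induction k using Nat.strong_induction_on generalizing a with
    | _ k ih =>
      rcases Nat.eq_zero_or_pos k with rfl | hk0
      · exact (Subtype.ext hk : a = b) ▸ .refl _ _
      obtain ⟨r, hr, hret, -, hmin⟩ := firstReturn_spec π S a.2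
      have hrk : r ≤ k := not_lt.1 fun hlt => hmin k hk0 hlt (hk ▸ b.2)
      have hstep : (π ^ (k - r)) (inducedPerm π S a) = b := by
        rw [inducedPerm_apply, hret, ← mul_apply, ← pow_add, Nat.sub_add_cancel hrk, hk]
      exact (sameCycle_apply_right.2 (.refl _ _)).trans (ih (k - r) (by omega) hstep)

end FirstReturn

section InducedKreweras

variable {N : ℕ} (π : Perm (Fin N)) {γ : Perm (Fin N)} {S : Set (Fin N)}
  (hγ : ∀ x, γ x ∈ S ↔ x ∈ S)

noncomputable def inducedKreweras : Perm S := γ.subtypePerm hγ * (inducedPerm π S)⁻¹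

theorem inducedKreweras_apply {a : S} (ha : (γ * π⁻¹) a ∈ S) :
    (inducedKreweras π hγ a : Fin N) = (γ * π⁻¹) a := by
  have hinv : π⁻¹ a ∈ S := (hγ _).1 ha
  simp only [inducedKreweras, mul_apply, subtypePerm_apply, inducedPerm_inv_apply π S hinv]

theorem mapsTo_inducedKreweras_withinPart :
    Set.MapsTo (inducedKreweras π hγ) (Subtype.val ⁻¹' withinPart (γ * π⁻¹) S)
      (Subtype.val ⁻¹' withinPart (γ * π⁻¹) S) := fun a ha => by
  rw [mem_preimage, inducedKreweras_apply π hγ (apply_mem_withinPart ha).1]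
  exact apply_mem_withinPart ha

theorem sameCycle_inducedKreweras_iff {a : S} (ha : (a : Fin N) ∈ withinPart (γ * π⁻¹) S)
    {b : S} : (inducedKreweras π hγ).SameCycle a b ↔ (γ * π⁻¹).SameCycle a b :=
  sameCycle_iff_of_semiconjOn Subtype.val_injective (mapsTo_inducedKreweras_withinPart π hγ)
    (fun _ hc => inducedKreweras_apply π hγ (apply_mem_withinPart hc).1) ha

theorem numCycles_inducedKreweras :
    numCycles (inducedKreweras π hγ) = numCyclesOn (γ * π⁻¹) (withinPart (γ * π⁻¹) S) +
      numCyclesOn (inducedKreweras π hγ) (Subtype.val ⁻¹' crossingPart (γ * π⁻¹) S) := by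
  set T : Set S := Subtype.val ⁻¹' withinPart (γ * π⁻¹) S
  have hcompl : Subtype.val ⁻¹' crossingPart (γ * π⁻¹) S = Tᶜ := by
    ext a
    exact mem_crossingPart_iff_notMem_withinPart a.2
  have hT : numCyclesOn (inducedKreweras π hγ) T =
      numCyclesOn (γ * π⁻¹) (withinPart (γ * π⁻¹) S) := by
    rw [← numCyclesOn_image (s := T) fun a ha b _ => sameCycle_inducedKreweras_iff π hγ ha,
      Subtype.image_preimage_coe, inter_eq_right.2 fun _ hx => hx.1]
  rw [numCycles, ← union_compl_self T, numCyclesOn_union, hT, hcompl]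
  exact fun a ha b hb hab => hb (hab.mem_of_mapsTo (mapsTo_inducedKreweras_withinPart π hγ) ha)

theorem numCyclesOn_add_withinPart_add_inducedKreweras_le
    (hγS : ∀ a ∈ S, ∀ b ∈ S, γ.SameCycle a b) :
    numCyclesOn π S + numCyclesOn (γ * π⁻¹) (withinPart (γ * π⁻¹) S) +
      numCyclesOn (inducedKreweras π hγ) (Subtype.val ⁻¹' crossingPart (γ * π⁻¹) S) ≤
      S.ncard + 1 := by
  have hP : numCycles (inducedPerm π S) = numCyclesOn π S := by
    rw [numCycles, ← numCyclesOn_image fun a _ b _ => sameCycle_inducedPerm_iff π S,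
      Subtype.coe_image_univ]
  have hρ : numCycles (inducedKreweras π hγ * inducedPerm π S) ≤ 1 := by
    rw [inducedKreweras, inv_mul_cancel_right]
    exact numCyclesOn_le_one fun a _ b _ => sameCycle_subtypePerm.2 (hγS a a.2 b b.2)
  have hgenus := numCycles_add_numCycles_le (inducedPerm π S) (inducedKreweras π hγ)
  rw [hP, Nat.card_coe_set_eq, numCycles_inducedKreweras] at hgenus
  omega

theorem one_le_numCyclesOn_inducedKreweras (h : (crossingPart (γ * π⁻¹) S).Nonempty) :
    1 ≤ numCyclesOn (inducedKreweras π hγ) (Subtype.val ⁻¹' crossingPart (γ * π⁻¹) S) := by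
  obtain ⟨y, hy, hyc⟩ := inter_crossingPart_nonempty h
  exact numCyclesOn_pos ⟨⟨y, hy⟩, hyc⟩

theorem crossingPart_eq_setOf_sameCycle_inducedKreweras
    (h : numCyclesOn (inducedKreweras π hγ) (Subtype.val ⁻¹' crossingPart (γ * π⁻¹) S) = 1)
    {a : S} (ha : (a : Fin N) ∈ crossingPart (γ * π⁻¹) S) :
    Subtype.val ⁻¹' crossingPart (γ * π⁻¹) S = {b | (inducedKreweras π hγ).SameCycle a b} := by
  refine eq_setOf_sameCycle_of_numCyclesOn_eq_one (fun c hc d hcd => ?_) h ha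
  rw [mem_preimage, mem_crossingPart_iff_notMem_withinPart d.2]
  exact fun hd => (mem_crossingPart_iff_notMem_withinPart c.2).1 hc
    (hcd.symm.mem_of_mapsTo (mapsTo_inducedKreweras_withinPart π hγ) hd)

theorem numCyclesOn_inducedKreweras_crossingPart_eq_one
    (hγS : ∀ a ∈ S, ∀ b ∈ S, γ.SameCycle a b) (hγSc : ∀ a ∈ Sᶜ, ∀ b ∈ Sᶜ, γ.SameCycle a b)
    (hsum : numCycles π + numCycles (γ * π⁻¹) = N) (hcross : (crossingPart π S).Nonempty) :
    numCyclesOn (inducedKreweras π hγ) (Subtype.val ⁻¹' crossingPart (γ * π⁻¹) S) = 1 := by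
  have hγc : ∀ x, γ x ∈ Sᶜ ↔ x ∈ Sᶜ := fun x => not_congr (hγ x)
  have hγinv : ∀ x, γ⁻¹ x ∈ S ↔ x ∈ S := fun x => by simpa using (hγ (γ⁻¹ x)).symm
  have hγinvc : ∀ x, γ⁻¹ x ∈ Sᶜ ↔ x ∈ Sᶜ := fun x => not_congr (hγinv x)
  have hinvS : ∀ a ∈ S, ∀ b ∈ S, γ⁻¹.SameCycle a b := fun a ha b hb =>
    sameCycle_inv.2 (hγS a ha b hb)
  have hinvSc : ∀ a ∈ Sᶜ, ∀ b ∈ Sᶜ, γ⁻¹.SameCycle a b := fun a ha b hb =>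
    sameCycle_inv.2 (hγSc a ha b hb)
  have hσπ : γ⁻¹ * (γ * π⁻¹)⁻¹⁻¹ = π⁻¹ := by group
  have hσcross : (crossingPart (γ * π⁻¹) S).Nonempty := crossingPart_mul_inv_nonempty hγ hcross
  have hσcross' : (crossingPart (γ * π⁻¹) Sᶜ).Nonempty := by rwa [crossingPart_compl]
  have hπcross : (crossingPart (γ⁻¹ * (γ * π⁻¹)⁻¹⁻¹) S).Nonempty := by
    rwa [hσπ, crossingPart_inv]
  have hπcross' : (crossingPart (γ⁻¹ * (γ * π⁻¹)⁻¹⁻¹) Sᶜ).Nonempty := by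
    rwa [hσπ, crossingPart_inv, crossingPart_compl]
  have u₁ := one_le_numCyclesOn_inducedKreweras π hγ hσcross
  have u₂ := one_le_numCyclesOn_inducedKreweras π hγc hσcross'
  have v₁ := one_le_numCyclesOn_inducedKreweras (γ * π⁻¹)⁻¹ hγinv hπcross
  have v₂ := one_le_numCyclesOn_inducedKreweras (γ * π⁻¹)⁻¹ hγinvc hπcross'
  have h₁ := numCyclesOn_add_withinPart_add_inducedKreweras_le π hγ hγS
  have h₂ := numCyclesOn_add_withinPart_add_inducedKreweras_le π hγc hγSc
  have h₃ := numCyclesOn_add_withinPart_add_inducedKreweras_le (γ * π⁻¹)⁻¹ hγinv hinvS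
  have h₄ := numCyclesOn_add_withinPart_add_inducedKreweras_le (γ * π⁻¹)⁻¹ hγinvc hinvSc
  simp only [hσπ, numCyclesOn_inv, withinPart_inv] at h₃ h₄ v₁ v₂
  have hcard : S.ncard + Sᶜ.ncard = N := by
    rw [ncard_add_ncard_compl, Nat.card_eq_fintype_card, Fintype.card_fin]
  have d₁ := numCyclesOn_eq_withinPart_add_crossingPart π S
  have d₂ := numCyclesOn_eq_withinPart_add_crossingPart π Sᶜ
  have d₃ := numCyclesOn_eq_withinPart_add_crossingPart (γ * π⁻¹) S
  have d₄ := numCyclesOn_eq_withinPart_add_crossingPart (γ * π⁻¹) Sᶜ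
  have d₅ := numCycles_eq_withinPart_add_withinPart_add_crossingPart π S
  have d₆ := numCycles_eq_withinPart_add_withinPart_add_crossingPart (γ * π⁻¹) S
  rw [crossingPart_compl] at d₂ d₄
  omega

end InducedKreweras

end Equiv.Perm

theorem numOrbits_eq_numCycles {n : ℕ} (σ : Equiv.Perm (Fin n)) :
    numOrbits σ = σ.numCycles :=
  σ.numCycles_eq_card_cycleType_add_card_fixedPoints.symm

section AnnularRotation

open Equiv.Perm

variable {m n : ℕ}

theorem annRot_castAdd (i : Fin m) :
    annRot m n (Fin.castAdd n i) = Fin.castAdd n (finRotate m i) := by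
  simp [annRot, Equiv.permCongr_apply]

theorem annRot_natAdd (j : Fin n) :
    annRot m n (Fin.natAdd m j) = Fin.natAdd m (finRotate n j) := by
  simp [annRot, Equiv.permCongr_apply]

theorem annRot_apply_lt_iff (x : Fin (m + n)) : (annRot m n x : ℕ) < m ↔ (x : ℕ) < m := by
  induction x using Fin.addCases with
  | left i => simp [annRot_castAdd]
  | right j => simp [annRot_natAdd]

theorem sameCycle_finRotate : ∀ {m : ℕ} (i j : Fin m), (finRotate m).SameCycle i j
  | 1, i, j => Subsingleton.elim i j ▸ .refl _ _
  | _ + 2, _, _ => isCycle_finRotate.sameCycle (by simp) (by simp)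

theorem sameCycle_annRot_of_lt {x y : Fin (m + n)} (hx : (x : ℕ) < m) (hy : (y : ℕ) < m) :
    (annRot m n).SameCycle x y := by
  obtain ⟨i, rfl⟩ : ∃ i : Fin m, Fin.castAdd n i = x := ⟨⟨x, hx⟩, rfl⟩
  obtain ⟨j, rfl⟩ : ∃ j : Fin m, Fin.castAdd n j = y := ⟨⟨y, hy⟩, rfl⟩
  exact (sameCycle_iff_of_semiconjOn (Fin.castAdd_injective m n) (Set.mapsTo_univ _ _)
    (fun i _ => (annRot_castAdd i).symm) (Set.mem_univ i)).1 (sameCycle_finRotate i j)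

theorem sameCycle_annRot_of_le {x y : Fin (m + n)} (hx : m ≤ (x : ℕ)) (hy : m ≤ (y : ℕ)) :
    (annRot m n).SameCycle x y := by
  obtain ⟨i, rfl⟩ : ∃ i : Fin n, Fin.natAdd m i = x :=
    ⟨⟨x - m, by omega⟩, Fin.ext (by simp; omega)⟩
  obtain ⟨j, rfl⟩ : ∃ j : Fin n, Fin.natAdd m j = y :=
    ⟨⟨y - m, by omega⟩, Fin.ext (by simp; omega)⟩
  exact (sameCycle_iff_of_semiconjOn (Fin.natAdd_injective n m) (Set.mapsTo_univ _ _)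
    (fun j _ => (annRot_natAdd j).symm) (Set.mem_univ i)).1 (sameCycle_finRotate i j)

variable {π : Perm (Fin (m + n))} {π₁ : Perm (Fin m)}
  (hγ : ∀ x, annRot m n x ∈ {j : Fin (m + n) | (j : ℕ) < m} ↔
    x ∈ {j : Fin (m + n) | (j : ℕ) < m})

theorem inducedKreweras_annRot_castAdd
    (hπ₁ : ∀ i : Fin m,
      Fin.castAdd n (π₁ i) = firstReturn π {j : Fin (m + n) | (j : ℕ) < m} (Fin.castAdd n i))
    (i : Fin m) :
    inducedKreweras π hγ ⟨Fin.castAdd n i, i.isLt⟩ =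
      ⟨Fin.castAdd n ((finRotate m * π₁⁻¹) i), ((finRotate m * π₁⁻¹) i).isLt⟩ := by
  have hPinv : (inducedPerm π {j : Fin (m + n) | (j : ℕ) < m})⁻¹ ⟨Fin.castAdd n i, i.isLt⟩ =
      ⟨Fin.castAdd n (π₁⁻¹ i), (π₁⁻¹ i).isLt⟩ := by
    refine inv_eq_iff_eq.2 (Subtype.ext ?_)
    rw [inducedPerm_apply, ← hπ₁]
    simp
  refine Subtype.ext ?_
  change annRot m n ((inducedPerm π _)⁻¹ ⟨Fin.castAdd n i, i.isLt⟩ : Fin (m + n)) = _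
  rw [hPinv]
  exact annRot_castAdd _

theorem sameCycle_finRotate_mul_inv_iff
    (hπ₁ : ∀ i : Fin m,
      Fin.castAdd n (π₁ i) = firstReturn π {j : Fin (m + n) | (j : ℕ) < m} (Fin.castAdd n i))
    (i j : Fin m) :
    (finRotate m * π₁⁻¹).SameCycle i j ↔
      (inducedKreweras π hγ).SameCycle ⟨Fin.castAdd n i, i.isLt⟩ ⟨Fin.castAdd n j, j.isLt⟩ :=
  sameCycle_iff_of_semiconjOn
    (f := fun i : Fin m => (⟨Fin.castAdd n i, i.isLt⟩ : ↥{j : Fin (m + n) | (j : ℕ) < m}))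
    (fun _ _ h => Fin.castAdd_injective m n (congrArg Subtype.val h)) (Set.mapsTo_univ _ _)
    (fun i _ => (inducedKreweras_annRot_castAdd hγ hπ₁ i).symm) (Set.mem_univ i)

end AnnularRotation

open Equiv.Perm in
theorem stmt10_general (m n : ℕ)
    (π : Equiv.Perm (Fin (m + n))) (hπ : IsAnnularNC m n π)
    (π₁ : Equiv.Perm (Fin m))
    (hπ₁ : ∀ i : Fin m,
      Fin.castAdd n (π₁ i) =
        firstReturn π {j : Fin (m + n) | (j : ℕ) < m} (Fin.castAdd n i))
    (Bbar : Set (Fin m))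
    (hBbar : Bbar = {i : Fin m | ∃ j : Fin (m + n), m ≤ (j : ℕ) ∧
      (annRot m n * π⁻¹).SameCycle (Fin.castAdd n i) j}) :
    IsBlock (finRotate m * π₁⁻¹) Bbar := by
  set S : Set (Fin (m + n)) := {j | (j : ℕ) < m}
  obtain ⟨⟨x, y, hx, hy, hxy⟩, hsum⟩ := hπ
  have hγ : ∀ x, annRot m n x ∈ S ↔ x ∈ S := annRot_apply_lt_iff
  have hcross : (crossingPart π S).Nonempty := ⟨x, ⟨x, hx, .refl _ _⟩, y, not_lt.2 hy, hxy⟩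
  have hone := numCyclesOn_inducedKreweras_crossingPart_eq_one π hγ
    (fun a ha b hb => sameCycle_annRot_of_lt ha hb)
    (fun a ha b hb => sameCycle_annRot_of_le (not_lt.1 ha) (not_lt.1 hb))
    (by rwa [numOrbits_eq_numCycles, numOrbits_eq_numCycles] at hsum) hcross
  obtain ⟨a, ha, haB⟩ := inter_crossingPart_nonempty (crossingPart_mul_inv_nonempty hγ hcross)
  have hblock := crossingPart_eq_setOf_sameCycle_inducedKreweras π hγ hone (a := ⟨a, ha⟩) haB
  refine ⟨⟨a, ha⟩, Set.ext fun i => ?_⟩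
  have hmem := Set.ext_iff.1 hblock ⟨Fin.castAdd n i, i.isLt⟩
  rw [Set.mem_preimage, mem_crossingPart_iff_of_mem (s := S) i.isLt] at hmem
  rw [hBbar, Set.mem_ofPred_eq, Set.mem_ofPred_eq, sameCycle_finRotate_mul_inv_iff hγ hπ₁]
  exact (exists_congr fun j => and_congr_left' not_lt.symm).trans hmem

theorem stmt10 (m n : ℕ) (hm : 1 ≤ m) (hn : 1 ≤ n)
    (π : Equiv.Perm (Fin (m + n))) (hπ : IsAnnularNC m n π)
    (π₁ : Equiv.Perm (Fin m))
    (hπ₁ : ∀ i : Fin m,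
      Fin.castAdd n (π₁ i) =
        firstReturn π {j : Fin (m + n) | (j : ℕ) < m} (Fin.castAdd n i))
    (Bbar : Set (Fin m))
    (hBbar : Bbar = {i : Fin m | ∃ j : Fin (m + n), m ≤ (j : ℕ) ∧
      (annRot m n * π⁻¹).SameCycle (Fin.castAdd n i) j}) :
    IsBlock (finRotate m * π₁⁻¹) Bbar :=
  stmt10_general m n π hπ π₁ hπ₁ Bbar hBbar
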